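/- arXiv:1907.12267 — 3 statements merged into one kernel-verified Lean document; each statement's English description precedes it below -/
import Mathlib

section
/- Let X be a random variable with the chi distribution with k degrees of freedom, for any real k > 0. Then X satisfies a Poincaré inequality with constant 1: for every continuously differentiable function f : ℝ → ℝ with f and f' square-integrable with respect to the law of X, Var[f(X)] ≤ E[f'(X)²]. -/
/-!
For `y ≤ x`, Cauchy–Schwarz gives `(f x - f y)² ≤ (x - y) ∫_y^x f'²`. Integrating against `μ ⊗ μ`
and exchanging the order of integration bounds `2 Var f = ∬ (f x - f y)²` by `∫ f'(t)² K(t) dt`,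
where `K(t) = 2 ∬_{y ≤ t < x} (x - y) dμ(x) dμ(y)`; a direct computation gives
`K(t) = 2 ∫_{x > t} (x - m) dμ(x)`, `m` the mean of `μ`. Hence the Poincaré inequality with
constant `1` holds as soon as `∫_{x > t} (x - m) dμ(x)` is at most the density of `μ` at `t`.

For the chi law, with `φ(x) = x^(k-1) e^(-x²/2)` and `ψ(t) = ∫_t^∞ (x - m) φ(x) dx`, one has
`(φ - ψ)' = ((k - 1)/t - m) φ`, which changes sign at most once, from `+` to `-`. Since `φ - ψ`
vanishes at `∞`, and at `0⁺` when `k > 1` (there `ψ(0) = 0` is the definition of `m`), `ψ ≤ φ`.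
-/

open MeasureTheory

noncomputable def chiMeasure (k : ℝ) : Measure ℝ :=
  volume.withDensity fun x =>
    ENNReal.ofReal (if 0 < x then
      x ^ (k - 1) * Real.exp (-x ^ 2 / 2) / ((2 : ℝ) ^ (k / 2 - 1) * Real.Gamma (k / 2))
    else 0)

open Real Set Filter Topology
open scoped ENNReal

section Variance

variable {α : Type*} [MeasurableSpace α] {ν : Measure α} [IsProbabilityMeasure ν] {g : α → ℝ}

theorem integral_const_sub_sq (hg : Integrable g ν) (hg2 : Integrable (fun x => g x ^ 2) ν)
    (c : ℝ) : ∫ y, (c - g y) ^ 2 ∂ν = c ^ 2 - 2 * c * ∫ y, g y ∂ν + ∫ y, g y ^ 2 ∂ν := by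
  simp_rw [sub_sq]
  rw [integral_add (by fun_prop) hg2, integral_sub (integrable_const _) (hg.const_mul _),
    integral_const, integral_const_mul, probReal_univ, one_smul]

theorem lintegral_lintegral_ofReal_sub_sq (hg : Integrable g ν)
    (hg2 : Integrable (fun x => g x ^ 2) ν) :
    ∫⁻ x, ∫⁻ y, ENNReal.ofReal ((g x - g y) ^ 2) ∂ν ∂ν =
      ENNReal.ofReal (2 * (∫ x, g x ^ 2 ∂ν - (∫ x, g x ∂ν) ^ 2)) := by
  set V : α → ℝ := fun x => g x ^ 2 - 2 * g x * ∫ y, g y ∂ν + ∫ y, g y ^ 2 ∂ν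
  have hV : ∀ x, ∫ y, (g x - g y) ^ 2 ∂ν = V x := fun x => integral_const_sub_sq hg hg2 (g x)
  have hinner : ∀ x, ∫⁻ y, ENNReal.ofReal ((g x - g y) ^ 2) ∂ν = ENNReal.ofReal (V x) := by
    intro x
    rw [← hV, ofReal_integral_eq_lintegral_ofReal _ (ae_of_all _ fun y => sq_nonneg _)]
    simp_rw [sub_sq]
    fun_prop
  simp_rw [hinner]
  rw [← ofReal_integral_eq_lintegral_ofReal (by fun_prop)
    (ae_of_all _ fun x => hV x ▸ integral_nonneg fun y => sq_nonneg _)]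
  congr 1
  rw [integral_add (by fun_prop) (integrable_const _), integral_sub hg2 (by fun_prop),
    integral_const, integral_mul_const, integral_const_mul, probReal_univ, one_smul]
  ring

end Variance

section Poincare

variable {f f' : ℝ → ℝ}

theorem sq_sub_le_mul_integral_deriv_sq (hderiv : ∀ x, HasDerivAt f (f' x) x)
    (hf' : Continuous f') {a b : ℝ} (hab : a ≤ b) :
    (f b - f a) ^ 2 ≤ (b - a) * ∫ t in Ico a b, f' t ^ 2 := by
  rcases hab.eq_or_lt with rfl | hab
  · simp
  have hftc : ∫ t in Ico a b, f' t = f b - f a := by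
    rw [integral_Ico_eq_integral_Ioc, ← intervalIntegral.integral_of_le hab.le]
    exact intervalIntegral.integral_eq_sub_of_hasDerivAt (fun t _ => hderiv t)
      (hf'.intervalIntegrable a b)
  have hvol : volume.real (Ico a b) = b - a := by simp [hab.le]
  have jensen := (even_two.convexOn_pow (𝕜 := ℝ)).map_set_average_le (μ := volume)
    (t := Ico a b) (continuous_pow 2).continuousOn isClosed_univ (by simp [hab])
    (by simp) (Eventually.of_forall fun _ => mem_univ _)
    (hf'.integrableOn_Icc.mono_set Ico_subset_Icc_self)
    ((hf'.pow 2).integrableOn_Icc.mono_set Ico_subset_Icc_self)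
  simp only [setAverage_eq, hvol, hftc, smul_eq_mul] at jensen
  rw [mul_pow, inv_pow, ← div_eq_inv_mul, ← div_eq_inv_mul,
    div_le_div_iff₀ (by positivity) (sub_pos.2 hab)] at jensen
  nlinarith

noncomputable def crossWeight (x y t : ℝ) : ℝ≥0∞ :=
  if y ≤ t ∧ t < x then ENNReal.ofReal (x - y) else 0

@[fun_prop]
theorem measurable_crossWeight {α : Type*} [MeasurableSpace α] {X Y T : α → ℝ}
    (hX : Measurable X) (hY : Measurable Y) (hT : Measurable T) :
    Measurable fun a => crossWeight (X a) (Y a) (T a) :=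
  Measurable.ite ((measurableSet_le hY hT).inter (measurableSet_lt hT hX))
    (hX.sub hY).ennreal_ofReal measurable_const

theorem lintegral_mul_crossWeight (g : ℝ → ℝ≥0∞) (x y : ℝ) :
    ∫⁻ t, g t * crossWeight x y t = (∫⁻ t in Ico y x, g t) * ENNReal.ofReal (x - y) := by
  have hind : (fun t => g t * crossWeight x y t) =
      (Ico y x).indicator fun t => g t * ENNReal.ofReal (x - y) := by
    ext t
    by_cases ht : t ∈ Ico y x <;> simp_all [crossWeight]
  rw [hind, lintegral_indicator measurableSet_Ico, lintegral_mul_const' _ _ ENNReal.ofReal_ne_top]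

theorem ofReal_sq_sub_le_lintegral_crossWeight (hderiv : ∀ x, HasDerivAt f (f' x) x)
    (hf' : Continuous f') (x y : ℝ) :
    ENNReal.ofReal ((f x - f y) ^ 2) ≤
      ∫⁻ t, ENNReal.ofReal (f' t ^ 2) * (crossWeight x y t + crossWeight y x t) := by
  wlog hyx : y ≤ x generalizing x y
  · simpa only [add_comm, ← neg_sub (f x), neg_sq] using this y x (le_of_not_ge hyx)
  have hint : IntegrableOn (fun t => f' t ^ 2) (Ico y x) :=
    (hf'.pow 2).integrableOn_Icc.mono_set Ico_subset_Icc_self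
  calc ENNReal.ofReal ((f x - f y) ^ 2)
      ≤ ENNReal.ofReal ((x - y) * ∫ t in Ico y x, f' t ^ 2) :=
        ENNReal.ofReal_le_ofReal (sq_sub_le_mul_integral_deriv_sq hderiv hf' hyx)
    _ = ∫⁻ t, ENNReal.ofReal (f' t ^ 2) * crossWeight x y t := by
        rw [lintegral_mul_crossWeight,
          ← ofReal_integral_eq_lintegral_ofReal hint (Eventually.of_forall fun t => sq_nonneg _),
          ENNReal.ofReal_mul (sub_nonneg.2 hyx), mul_comm]
    _ ≤ _ := lintegral_mono fun t => by gcongr; exact le_self_add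

variable {μ : Measure ℝ}

noncomputable def centeredTailIntegral (μ : Measure ℝ) (t : ℝ) : ℝ :=
  ∫ x in Ioi t, (x - ∫ y, y ∂μ) ∂μ

theorem centeredTailIntegral_eq_zero_of_ae_lt [IsProbabilityMeasure μ]
    (hμ : Integrable (fun x => x) μ) {t : ℝ} (h : ∀ᵐ x ∂μ, t < x) :
    centeredTailIntegral μ t = 0 := by
  rw [centeredTailIntegral, Measure.restrict_eq_self_of_ae_mem (s := Ioi t) h,
    integral_sub hμ (integrable_const _), integral_const, probReal_univ, one_smul, sub_self]

theorem setIntegral_const_sub [IsFiniteMeasure μ] (hμ : Integrable (fun x => x) μ) (x : ℝ)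
    (s : Set ℝ) : ∫ y in s, (x - y) ∂μ = x * μ.real s - ∫ y in s, y ∂μ := by
  rw [integral_sub (integrable_const x) hμ.integrableOn, setIntegral_const, smul_eq_mul, mul_comm]

theorem lintegral_crossWeight_left [IsFiniteMeasure μ] (hμ : Integrable (fun x => x) μ)
    (x t : ℝ) : ∫⁻ y, crossWeight x y t ∂μ =
      (Ioi t).indicator (fun x => ENNReal.ofReal (∫ y in Iic t, (x - y) ∂μ)) x := by
  by_cases hx : t < x
  · have hind : (fun y => crossWeight x y t) =
        (Iic t).indicator fun y => ENNReal.ofReal (x - y) := by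
      ext y
      by_cases hy : y ≤ t <;> simp [crossWeight, hx, hy]
    rw [hind, lintegral_indicator measurableSet_Iic, indicator_of_mem (mem_Ioi.2 hx)]
    refine (ofReal_integral_eq_lintegral_ofReal
      ((integrable_const x).sub hμ).integrableOn ?_).symm
    filter_upwards [ae_restrict_mem measurableSet_Iic] with y hy
    exact sub_nonneg.2 (le_of_lt (lt_of_le_of_lt hy hx))
  · simp [crossWeight, hx]

theorem lintegral_lintegral_crossWeight [IsProbabilityMeasure μ]
    (hμ : Integrable (fun x => x) μ) (t : ℝ) :
    ∫⁻ x, ∫⁻ y, crossWeight x y t ∂μ ∂μ = ENNReal.ofReal (centeredTailIntegral μ t) := by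
  set F := μ.real (Iic t)
  set a := ∫ y in Iic t, y ∂μ
  have hinner : ∀ x, ∫ y in Iic t, (x - y) ∂μ = x * F - a := fun x =>
    setIntegral_const_sub hμ x _
  simp_rw [lintegral_crossWeight_left hμ]
  rw [lintegral_indicator measurableSet_Ioi, ← ofReal_integral_eq_lintegral_ofReal]
  · congr 1
    have hFG : F + μ.real (Ioi t) = 1 := by
      rw [← probReal_univ (μ := μ), ← Iic_union_Ioi (a := t),
        measureReal_union (Iic_disjoint_Ioi le_rfl) measurableSet_Ioi]
    have hab : a + ∫ x in Ioi t, x ∂μ = ∫ x, x ∂μ := by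
      rw [← setIntegral_union (Iic_disjoint_Ioi le_rfl) measurableSet_Ioi hμ.integrableOn
        hμ.integrableOn, Iic_union_Ioi, Measure.restrict_univ]
    simp_rw [hinner]
    rw [centeredTailIntegral,
      integral_sub (hμ.mul_const F).integrableOn (integrable_const a).integrableOn,
      integral_sub hμ.integrableOn (integrable_const _).integrableOn, integral_mul_const,
      setIntegral_const, setIntegral_const, smul_eq_mul, smul_eq_mul]
    linear_combination (∫ x in Ioi t, x ∂μ) * hFG - μ.real (Ioi t) * hab
  · simp_rw [hinner]
    exact ((hμ.mul_const F).sub (integrable_const a)).integrableOn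
  · filter_upwards [ae_restrict_mem measurableSet_Ioi] with x hx
    refine setIntegral_nonneg measurableSet_Iic fun y hy => ?_
    exact sub_nonneg.2 (le_of_lt (lt_of_le_of_lt hy hx))

theorem lintegral_lintegral_lintegral_mul_crossWeight [IsProbabilityMeasure μ]
    (hμ : Integrable (fun x => x) μ) {g : ℝ → ℝ≥0∞} (hg : Measurable g) :
    ∫⁻ x, ∫⁻ y, (∫⁻ t, g t * (crossWeight x y t + crossWeight y x t)) ∂μ ∂μ =
      2 * ∫⁻ t, g t * ENNReal.ofReal (centeredTailIntegral μ t) := by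
  have hkernel : ∀ t, ∫⁻ x, ∫⁻ y, (crossWeight x y t + crossWeight y x t) ∂μ ∂μ =
      2 * ENNReal.ofReal (centeredTailIntegral μ t) := by
    intro t
    have hcw : Measurable fun p : ℝ × ℝ => crossWeight p.1 p.2 t := by fun_prop
    rw [lintegral_congr fun x => lintegral_add_left (f := fun y => crossWeight x y t)
        (by fun_prop) _,
      lintegral_add_left hcw.lintegral_prod_right',
      lintegral_lintegral_swap (f := fun x y => crossWeight y x t) (by fun_prop),
      lintegral_lintegral_crossWeight hμ, two_mul]
  have hK : Measurable fun p : (ℝ × ℝ) × ℝ =>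
      g p.1.2 * (crossWeight p.1.1 p.2 p.1.2 + crossWeight p.2 p.1.1 p.1.2) := by fun_prop
  rw [lintegral_congr fun x => lintegral_lintegral_swap (by fun_prop),
    lintegral_lintegral_swap (hK.lintegral_prod_right' (ν := μ)).aemeasurable,
    ← lintegral_const_mul' _ _ ENNReal.ofNat_ne_top]
  refine lintegral_congr fun t => ?_
  have hsum : Measurable fun p : ℝ × ℝ => crossWeight p.1 p.2 t + crossWeight p.2 p.1 t := by
    fun_prop
  rw [lintegral_congr fun x => lintegral_const_mul (g t)
      (f := fun y => crossWeight x y t + crossWeight y x t) (by fun_prop),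
    lintegral_const_mul (g t) hsum.lintegral_prod_right', hkernel, mul_left_comm]

theorem ofReal_variance_le_lintegral_deriv_sq_mul_centeredTail [IsProbabilityMeasure μ]
    (hμ : Integrable (fun x => x) μ) (hderiv : ∀ x, HasDerivAt f (f' x) x) (hf' : Continuous f')
    (hf : Integrable f μ) (hf2 : Integrable (fun x => f x ^ 2) μ) :
    ENNReal.ofReal (∫ x, f x ^ 2 ∂μ - (∫ x, f x ∂μ) ^ 2) ≤
      ∫⁻ t, ENNReal.ofReal (f' t ^ 2) * ENNReal.ofReal (centeredTailIntegral μ t) := by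
  refine (ENNReal.mul_le_mul_iff_right two_ne_zero ENNReal.ofNat_ne_top).1 ?_
  rw [← lintegral_lintegral_lintegral_mul_crossWeight hμ (by fun_prop),
    ← ENNReal.ofReal_ofNat, ← ENNReal.ofReal_mul zero_le_two,
    ← lintegral_lintegral_ofReal_sub_sq hf hf2]
  exact lintegral_mono fun x => lintegral_mono fun y =>
    ofReal_sq_sub_le_lintegral_crossWeight hderiv hf' x y

theorem variance_le_integral_deriv_sq_of_centeredTailIntegral_le [IsProbabilityMeasure μ]
    {ρ : ℝ → ℝ≥0∞} (hρ : Measurable ρ) (hμρ : μ = volume.withDensity ρ)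
    (htail : ∀ t, ENNReal.ofReal (centeredTailIntegral μ t) ≤ ρ t)
    (hμ : Integrable (fun x => x) μ) (hderiv : ∀ x, HasDerivAt f (f' x) x) (hf' : Continuous f')
    (hf : Integrable f μ) (hf2 : Integrable (fun x => f x ^ 2) μ)
    (hf'2 : Integrable (fun x => f' x ^ 2) μ) :
    ∫ x, f x ^ 2 ∂μ - (∫ x, f x ∂μ) ^ 2 ≤ ∫ x, f' x ^ 2 ∂μ := by
  rw [← ENNReal.ofReal_le_ofReal_iff (integral_nonneg fun x => sq_nonneg _),
    ofReal_integral_eq_lintegral_ofReal hf'2 (ae_of_all _ fun x => sq_nonneg _)]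
  calc _ ≤ ∫⁻ t, ENNReal.ofReal (f' t ^ 2) * ENNReal.ofReal (centeredTailIntegral μ t) :=
        ofReal_variance_le_lintegral_deriv_sq_mul_centeredTail hμ hderiv hf' hf hf2
    _ ≤ ∫⁻ t, ρ t * ENNReal.ofReal (f' t ^ 2) :=
        lintegral_mono fun t => by rw [mul_comm]; gcongr; exact htail t
    _ = ∫⁻ x, ENNReal.ofReal (f' x ^ 2) ∂μ := by
        rw [hμρ, lintegral_withDensity_eq_lintegral_mul _ hρ (by fun_prop)]
        rfl

end Poincare

noncomputable def chiWeight (k x : ℝ) : ℝ := x ^ (k - 1) * exp (-x ^ 2 / 2)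

noncomputable def chiConst (k : ℝ) : ℝ := 2 ^ (k / 2 - 1) * Gamma (k / 2)

noncomputable def chiTail (k m t : ℝ) : ℝ := ∫ x in Ioi t, (x - m) * chiWeight k x

section ChiWeight

variable {k m t : ℝ}

theorem chiWeight_pos (ht : 0 < t) : 0 < chiWeight k t :=
  mul_pos (rpow_pos_of_pos ht _) (exp_pos _)

@[fun_prop]
theorem measurable_chiWeight (k : ℝ) : Measurable (chiWeight k) := by
  unfold chiWeight; fun_prop

theorem hasDerivAt_chiWeight (ht : 0 < t) :
    HasDerivAt (chiWeight k) (((k - 1) / t - t) * chiWeight k t) t := by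
  have hpow := hasDerivAt_rpow_const (p := k - 1) (Or.inl ht.ne')
  have hsq : HasDerivAt (fun x : ℝ => -x ^ 2 / 2) (-t) t :=
    ((hasDerivAt_pow 2 t).neg.div_const 2).congr_deriv (by ring)
  refine (hpow.mul hsq.exp).congr_deriv ?_
  rw [chiWeight, rpow_sub_one ht.ne' (k - 1)]
  field_simp
  ring

theorem tendsto_chiWeight_atTop (k : ℝ) : Tendsto (chiWeight k) atTop (𝓝 0) := by
  obtain ⟨n, hn⟩ := exists_nat_ge (k - 1)
  refine squeeze_zero' ?_ ?_ (tendsto_pow_mul_exp_neg_atTop_nhds_zero n)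
  · filter_upwards [eventually_gt_atTop 0] with x hx using (chiWeight_pos hx).le
  · filter_upwards [eventually_ge_atTop 2] with x hx
    calc chiWeight k x ≤ x ^ (n : ℝ) * exp (-x) := by
          refine mul_le_mul (rpow_le_rpow_of_exponent_le (by linarith) hn)
            (exp_le_exp.2 (by nlinarith)) (exp_nonneg _) (by positivity)
      _ = x ^ n * exp (-x) := by rw [rpow_natCast]

theorem tendsto_chiWeight_nhdsGT_zero (hk : 1 < k) : Tendsto (chiWeight k) (𝓝[>] 0) (𝓝 0) := by
  have hcont : ContinuousAt (chiWeight k) 0 :=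
    (continuousAt_rpow_const 0 (k - 1) (Or.inr (by linarith))).mul (by fun_prop)
  have hzero : chiWeight k 0 = 0 := by simp [chiWeight, zero_rpow (by linarith : k - 1 ≠ 0)]
  simpa only [hzero] using hcont.tendsto.mono_left nhdsWithin_le_nhds

theorem integrableOn_chiWeight (hk : 0 < k) : IntegrableOn (chiWeight k) (Ioi 0) :=
  (integrableOn_rpow_mul_exp_neg_mul_sq (b := 1 / 2) (s := k - 1) (by norm_num)
    (by linarith)).congr_fun
    (fun x _ => by rw [chiWeight]; ring_nf) measurableSet_Ioi

theorem integrableOn_id_mul_chiWeight (hk : 0 < k) :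
    IntegrableOn (fun x => x * chiWeight k x) (Ioi 0) := by
  refine (integrableOn_chiWeight (k := k + 1) (by linarith)).congr_fun (fun x hx => ?_)
    measurableSet_Ioi
  have hx : x ≠ 0 := ne_of_gt hx
  simp only [chiWeight, add_sub_cancel_right, rpow_sub_one hx]
  field_simp

theorem integrableOn_sub_mul_chiWeight (hk : 0 < k) (m : ℝ) :
    IntegrableOn (fun x => (x - m) * chiWeight k x) (Ioi 0) :=
  ((integrableOn_id_mul_chiWeight hk).sub ((integrableOn_chiWeight hk).const_mul m)).congr_fun
    (fun x _ => by simp only [Pi.sub_apply]; ring) measurableSet_Ioi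

theorem integral_chiWeight (hk : 0 < k) : ∫ x in Ioi 0, chiWeight k x = chiConst k := by
  have h := integral_rpow_mul_exp_neg_mul_rpow two_pos (by linarith : -1 < k - 1)
    (by norm_num : (0 : ℝ) < 1 / 2)
  have hw : ∀ x : ℝ, x ^ (k - 1) * exp (-(1 / 2) * x ^ (2 : ℝ)) = chiWeight k x := by
    intro x; rw [rpow_two, chiWeight]; ring_nf
  have hc : (1 / 2 : ℝ) ^ (-(k - 1 + 1) / 2) * (1 / 2) = 2 ^ (k / 2 - 1) := by
    rw [rpow_sub_one two_ne_zero, one_div, inv_rpow zero_le_two, ← rpow_neg zero_le_two,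
      div_eq_mul_inv]
    congr 2
    ring
  simp_rw [hw] at h
  rw [h, hc, chiConst, sub_add_cancel]

theorem chiTail_eq_sub_intervalIntegral (hk : 0 < k) (m : ℝ) (ht : 0 ≤ t) :
    chiTail k m t = chiTail k m 0 - ∫ x in (0)..t, (x - m) * chiWeight k x := by
  have hint := integrableOn_sub_mul_chiWeight hk m
  rw [chiTail, chiTail, ← Ioc_union_Ioi_eq_Ioi ht, setIntegral_union (Ioc_disjoint_Ioi le_rfl)
    measurableSet_Ioi (hint.mono_set Ioc_subset_Ioi_self) (hint.mono_set (Ioi_subset_Ioi ht)),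
    intervalIntegral.integral_of_le ht]
  ring

theorem hasDerivAt_chiTail (hk : 0 < k) (m : ℝ) (ht : 0 < t) :
    HasDerivAt (chiTail k m) (-((t - m) * chiWeight k t)) t := by
  have hint := integrableOn_sub_mul_chiWeight hk m
  have hftc := intervalIntegral.integral_hasDerivAt_right
    ((intervalIntegrable_iff_integrableOn_Ioc_of_le ht.le).2 (hint.mono_set Ioc_subset_Ioi_self))
    (Measurable.aestronglyMeasurable (by fun_prop)).stronglyMeasurableAtFilter
    ((continuousAt_id.sub continuousAt_const).mul (hasDerivAt_chiWeight ht).continuousAt)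
  refine (hftc.const_sub (chiTail k m 0)).congr_of_eventuallyEq ?_
  filter_upwards [lt_mem_nhds ht] with s hs using chiTail_eq_sub_intervalIntegral hk m hs.le

theorem tendsto_chiTail_atTop (hk : 0 < k) (m : ℝ) : Tendsto (chiTail k m) atTop (𝓝 0) := by
  have hlim : Tendsto (fun s => ∫ x in (0)..s, (x - m) * chiWeight k x) atTop
      (𝓝 (chiTail k m 0)) :=
    intervalIntegral_tendsto_integral_Ioi 0 (integrableOn_sub_mul_chiWeight hk m) tendsto_id
  rw [← sub_self (chiTail k m 0)]
  refine (hlim.const_sub _).congr' ?_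
  filter_upwards [eventually_ge_atTop 0] with s hs
  exact (chiTail_eq_sub_intervalIntegral hk m hs).symm

theorem tendsto_chiTail_nhdsGT_zero (hk : 0 < k) (m : ℝ) :
    Tendsto (chiTail k m) (𝓝[>] 0) (𝓝 (chiTail k m 0)) := by
  have hint : IntervalIntegrable (fun x => (x - m) * chiWeight k x) volume 0 1 :=
    (intervalIntegrable_iff_integrableOn_Ioc_of_le zero_le_one).2
      ((integrableOn_sub_mul_chiWeight hk m).mono_set Ioc_subset_Ioi_self)
  have hcont := intervalIntegral.continuousWithinAt_primitive (a := 0) (b₁ := 0) (b₂ := 1)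
    (measure_singleton 0) (by simpa using hint)
  rw [ContinuousWithinAt, intervalIntegral.integral_same] at hcont
  have hlim := (hcont.mono_left (nhdsWithin_le_of_mem (Icc_mem_nhdsGT one_pos))).const_sub
    (chiTail k m 0)
  rw [sub_zero] at hlim
  refine hlim.congr' ?_
  filter_upwards [self_mem_nhdsWithin] with s hs
  exact (chiTail_eq_sub_intervalIntegral hk m (le_of_lt hs)).symm

theorem chiTail_le_chiWeight (hk : 0 < k) (hm : 0 ≤ m) (h0 : chiTail k m 0 = 0) (ht : 0 < t) :
    chiTail k m t ≤ chiWeight k t := by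
  set D : ℝ → ℝ := fun s => chiWeight k s - chiTail k m s
  set D' : ℝ → ℝ := fun s => ((k - 1) / s - m) * chiWeight k s
  have hD : ∀ s, 0 < s → HasDerivAt D (D' s) s := fun s hs =>
    ((hasDerivAt_chiWeight hs).sub (hasDerivAt_chiTail hk m hs)).congr_deriv (by ring)
  rw [← sub_nonneg]
  -- `D'` changes sign once, where `m s = k - 1`
  rcases le_or_gt (k - 1) (m * t) with hkt | hkt
  · have hanti : AntitoneOn D (Ici t) := by
      refine antitoneOn_of_hasDerivWithinAt_nonpos (f' := D') (convex_Ici t)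
        (fun s hs => (hD s (ht.trans_le hs)).continuousAt.continuousWithinAt)
        (fun s hs => ?_) (fun s hs => ?_) <;> rw [interior_Ici] at hs
      · exact (hD s (ht.trans hs)).hasDerivWithinAt
      · refine mul_nonpos_of_nonpos_of_nonneg ?_ (chiWeight_pos (ht.trans hs)).le
        rw [sub_nonpos, div_le_iff₀ (ht.trans hs)]
        nlinarith [mem_Ioi.1 hs]
    have hlim : Tendsto D atTop (𝓝 0) := by
      simpa using (tendsto_chiWeight_atTop k).sub (tendsto_chiTail_atTop hk m)
    refine le_of_tendsto hlim ?_
    filter_upwards [eventually_ge_atTop t] with s hs using hanti self_mem_Ici hs hs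
  · have hk1 : 1 < k := by nlinarith
    have hmono : MonotoneOn D (Ioc 0 t) := by
      refine monotoneOn_of_hasDerivWithinAt_nonneg (f' := D') (convex_Ioc 0 t)
        (fun s hs => (hD s hs.1).continuousAt.continuousWithinAt)
        (fun s hs => ?_) (fun s hs => ?_) <;> rw [interior_Ioc] at hs
      · exact (hD s hs.1).hasDerivWithinAt
      · refine mul_nonneg ?_ (chiWeight_pos hs.1).le
        rw [sub_nonneg, le_div_iff₀ hs.1]
        nlinarith [hs.2]
    have hlim : Tendsto D (𝓝[>] 0) (𝓝 0) := by
      simpa [h0] using (tendsto_chiWeight_nhdsGT_zero hk1).sub (tendsto_chiTail_nhdsGT_zero hk m)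
    refine le_of_tendsto hlim ?_
    filter_upwards [Ioc_mem_nhdsGT ht] with s hs using hmono hs ⟨ht, le_rfl⟩ hs.2

end ChiWeight

noncomputable def chiDensity (k x : ℝ) : ℝ := if 0 < x then chiWeight k x / chiConst k else 0

section ChiMeasure

variable {k t : ℝ}

theorem chiMeasure_eq_withDensity (k : ℝ) :
    chiMeasure k = volume.withDensity fun x => ENNReal.ofReal (chiDensity k x) := rfl

theorem chiConst_pos (hk : 0 < k) : 0 < chiConst k :=
  mul_pos (rpow_pos_of_pos two_pos _) (Gamma_pos_of_pos (by linarith))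

@[fun_prop]
theorem measurable_chiDensity (k : ℝ) : Measurable (chiDensity k) :=
  Measurable.ite measurableSet_Ioi (by fun_prop) measurable_const

theorem chiDensity_eq_indicator (k : ℝ) :
    chiDensity k = (Ioi 0).indicator fun x => chiWeight k x / chiConst k := by
  ext x
  simp only [chiDensity, indicator, mem_Ioi]

theorem chiDensity_nonneg (hk : 0 < k) (x : ℝ) : 0 ≤ chiDensity k x := by
  rw [chiDensity_eq_indicator]
  exact indicator_nonneg (fun x hx => div_nonneg (chiWeight_pos hx).le (chiConst_pos hk).le) x

theorem isProbabilityMeasure_chiMeasure (hk : 0 < k) : IsProbabilityMeasure (chiMeasure k) := by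
  have hint : Integrable (chiDensity k) := by
    rw [chiDensity_eq_indicator]
    exact (integrable_indicator_iff measurableSet_Ioi).2 ((integrableOn_chiWeight hk).div_const _)
  constructor
  rw [chiMeasure_eq_withDensity, withDensity_apply _ MeasurableSet.univ, Measure.restrict_univ,
    ← ofReal_integral_eq_lintegral_ofReal hint (ae_of_all _ (chiDensity_nonneg hk)),
    chiDensity_eq_indicator, integral_indicator measurableSet_Ioi, integral_div,
    integral_chiWeight hk, div_self (chiConst_pos hk).ne', ENNReal.ofReal_one]

theorem ae_pos_chiMeasure (k : ℝ) : ∀ᵐ x ∂chiMeasure k, 0 < x := by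
  rw [ae_iff]
  refine measure_mono_null (fun x (hx : ¬0 < x) => mem_Iic.2 (not_lt.1 hx)) ?_
  rw [chiMeasure_eq_withDensity, withDensity_apply _ measurableSet_Iic]
  refine (setLIntegral_congr_fun measurableSet_Iic fun x hx => ?_).trans lintegral_zero
  simp [chiDensity, not_lt.2 (mem_Iic.1 hx)]

theorem integrable_id_chiMeasure (hk : 0 < k) : Integrable (fun x => x) (chiMeasure k) := by
  rw [chiMeasure_eq_withDensity, integrable_withDensity_iff (by fun_prop)
    (ae_of_all _ fun _ => ENNReal.ofReal_lt_top)]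
  have hind : (fun x => x * (ENNReal.ofReal (chiDensity k x)).toReal) =
      (Ioi 0).indicator fun x => x * chiWeight k x / chiConst k := by
    ext x
    rw [ENNReal.toReal_ofReal (chiDensity_nonneg hk x), chiDensity_eq_indicator]
    by_cases hx : x ∈ Ioi 0 <;> simp [hx, mul_div_assoc]
  rw [hind]
  exact (integrable_indicator_iff measurableSet_Ioi).2
    ((integrableOn_id_mul_chiWeight hk).div_const _)

theorem setIntegral_chiMeasure_Ioi (hk : 0 < k) (ht : 0 ≤ t) (g : ℝ → ℝ) :
    ∫ x in Ioi t, g x ∂chiMeasure k = (∫ x in Ioi t, g x * chiWeight k x) / chiConst k := by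
  rw [chiMeasure_eq_withDensity, setIntegral_withDensity_eq_setIntegral_toReal_smul₀
    (by fun_prop) (ae_of_all _ fun _ => ENNReal.ofReal_lt_top) g measurableSet_Ioi,
    ← integral_div]
  refine setIntegral_congr_fun measurableSet_Ioi fun x hx => ?_
  rw [ENNReal.toReal_ofReal (chiDensity_nonneg hk x), chiDensity, if_pos (ht.trans_lt hx),
    smul_eq_mul]
  ring

theorem centeredTailIntegral_chiMeasure (hk : 0 < k) (ht : 0 ≤ t) :
    centeredTailIntegral (chiMeasure k) t =
      chiTail k (∫ y, y ∂chiMeasure k) t / chiConst k :=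
  setIntegral_chiMeasure_Ioi hk ht _

theorem centeredTailIntegral_chiMeasure_le_chiDensity (hk : 0 < k) (t : ℝ) :
    centeredTailIntegral (chiMeasure k) t ≤ chiDensity k t := by
  have := isProbabilityMeasure_chiMeasure hk
  have hτ : ∀ s ≤ 0, centeredTailIntegral (chiMeasure k) s = 0 := fun s hs =>
    centeredTailIntegral_eq_zero_of_ae_lt (integrable_id_chiMeasure hk)
      ((ae_pos_chiMeasure k).mono fun x hx => hs.trans_lt hx)
  rcases le_or_gt t 0 with ht | ht
  · rw [hτ t ht, chiDensity, if_neg (not_lt.2 ht)]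
  have hm : 0 ≤ ∫ y, y ∂chiMeasure k :=
    integral_nonneg_of_ae ((ae_pos_chiMeasure k).mono fun x hx => hx.le)
  have h0 : chiTail k (∫ y, y ∂chiMeasure k) 0 = 0 := by
    have := hτ 0 le_rfl
    rwa [centeredTailIntegral_chiMeasure hk le_rfl, div_eq_zero_iff,
      or_iff_left (chiConst_pos hk).ne'] at this
  rw [centeredTailIntegral_chiMeasure hk ht.le, chiDensity, if_pos ht]
  exact div_le_div_of_nonneg_right (chiTail_le_chiWeight hk hm h0 ht) (chiConst_pos hk).le

end ChiMeasure

theorem chi_poincare_general {Ω : Type*} [MeasurableSpace Ω] (P : Measure Ω)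
    (k : ℝ) (hk : 0 < k) (X : Ω → ℝ) (hX : Measurable X)
    (hlaw : Measure.map X P = chiMeasure k)
    (f f' : ℝ → ℝ) (hderiv : ∀ x, HasDerivAt f (f' x) x) (hf' : Continuous f')
    (h1 : Integrable (fun ω => f (X ω)) P)
    (h2 : Integrable (fun ω => f (X ω) ^ 2) P)
    (h3 : Integrable (fun ω => f' (X ω) ^ 2) P) :
    (∫ ω, f (X ω) ^ 2 ∂P) - (∫ ω, f (X ω) ∂P) ^ 2 ≤ ∫ ω, f' (X ω) ^ 2 ∂P := by
  have := isProbabilityMeasure_chiMeasure hk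
  have htransfer : ∀ g : ℝ → ℝ, Continuous g → Integrable (fun ω => g (X ω)) P →
      Integrable g (chiMeasure k) ∧ ∫ ω, g (X ω) ∂P = ∫ x, g x ∂chiMeasure k := by
    intro g hg hgX
    rw [← hlaw]
    exact ⟨(integrable_map_measure hg.aestronglyMeasurable hX.aemeasurable).2 hgX,
      (integral_map hX.aemeasurable hg.aestronglyMeasurable).symm⟩
  have hfc : Continuous f := continuous_iff_continuousAt.2 fun x => (hderiv x).continuousAt
  obtain ⟨hf, e1⟩ := htransfer f hfc h1
  obtain ⟨hf2, e2⟩ := htransfer (fun x => f x ^ 2) (hfc.pow 2) h2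
  obtain ⟨hf'2, e3⟩ := htransfer (fun x => f' x ^ 2) (hf'.pow 2) h3
  rw [e1, e2, e3]
  exact variance_le_integral_deriv_sq_of_centeredTailIntegral_le (by fun_prop)
    (chiMeasure_eq_withDensity k)
    (fun t => ENNReal.ofReal_le_ofReal (centeredTailIntegral_chiMeasure_le_chiDensity hk t))
    (integrable_id_chiMeasure hk) hderiv hf' hf hf2 hf'2

/-- A chi-distributed random variable (any real `k > 0` degrees of freedom) satisfies a
Poincaré inequality with constant `1`: `Var[f(X)] ≤ E[f'(X)^2]`. -/
theorem chi_poincare {Ω : Type*} [MeasurableSpace Ω] (P : Measure Ω) [IsProbabilityMeasure P]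
    (k : ℝ) (hk : 0 < k) (X : Ω → ℝ) (hX : Measurable X)
    (hlaw : Measure.map X P = chiMeasure k)
    (f f' : ℝ → ℝ) (hderiv : ∀ x, HasDerivAt f (f' x) x) (hf' : Continuous f')
    (h1 : Integrable (fun ω => f (X ω)) P)
    (h2 : Integrable (fun ω => f (X ω) ^ 2) P)
    (h3 : Integrable (fun ω => f' (X ω) ^ 2) P) :
    (∫ ω, f (X ω) ^ 2 ∂P) - (∫ ω, f (X ω) ∂P) ^ 2 ≤ ∫ ω, f' (X ω) ^ 2 ∂P :=
  chi_poincare_general P k hk X hX hlaw f f' hderiv hf' h1 h2 h3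
end

section
/- Let Y be an M × N real matrix, X = YᵗY with eigenvalues λ_1, …, λ_N, and f : ℝ → ℝ continuously differentiable. Then Σ_{m,n} (∂ tr(f(YᵗY)) / ∂y_{mn})² = 4·tr(X·f'(X)²) = 4·Σ_{i=1}^N λ_i·f'(λ_i)². -/
/-!
Put `X(t) = (Y + t E)ᵀ (Y + t E)` with `E` the matrix unit at `(m, n)`, so that
`X'(0) = YᵀE + EᵀY`. Along any `C¹` path of symmetric matrices,
`d/dt tr f(X(t)) = tr (f'(X(t)) X'(t))`: for polynomial `f` this is cyclicity of the trace, and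
in general one approximates `f'` uniformly by polynomials `p'` on an interval containing all
the spectra, with `p` pinned to `f` at one point, and passes to the limit in the derivatives.
This is legitimate because every entry of `g(X)` is bounded by `N · sup |g|` over the spectrum
of `X`, uniformly in `X`. With `S = f'(YᵀY)` symmetric the partial derivative is
`2 (Y S)_{mn}`, so the sum of squares is `4 tr ((YS)ᵀ YS) = 4 tr (YᵀY S²)`, and evaluating the
trace in an eigenbasis of `YᵀY` gives `4 Σ λᵢ f'(λᵢ)²`.
-/

open Matrix Polynomial Set Filter Topology

theorem Polynomial.derivative_surjective {K : Type*} [Field K] [CharZero K] :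
    Function.Surjective (derivative : K[X] → K[X]) := by
  intro p
  induction p using Polynomial.induction_on' with
  | add p q hp hq =>
    obtain ⟨P, rfl⟩ := hp
    obtain ⟨Q, rfl⟩ := hq
    exact ⟨P + Q, derivative_add⟩
  | monomial k a =>
    refine ⟨monomial (k + 1) (a / (k + 1)), ?_⟩
    rw [derivative_monomial]
    push_cast
    congr 1
    field_simp

theorem tendstoUniformlyOn_of_abs_sub_le_one_div {α : Type*} {F : ℕ → α → ℝ} {g : α → ℝ} {s : Set α}
    (h : ∀ k, ∀ x ∈ s, |F k x - g x| ≤ 1 / (k + 1)) : TendstoUniformlyOn F g atTop s := by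
  rw [Metric.tendstoUniformlyOn_iff]
  intro ε hε
  obtain ⟨N, hN⟩ := exists_nat_one_div_lt hε
  filter_upwards [eventually_ge_atTop N] with k hk x hx
  rw [dist_comm, Real.dist_eq]
  calc |F k x - g x| ≤ 1 / (k + 1) := h k x hx
    _ ≤ 1 / (N + 1) := by gcongr
    _ < ε := hN

theorem exists_polynomial_near_of_contDiff_one {f : ℝ → ℝ} (hf : ContDiff ℝ 1 f) (a b : ℝ)
    {ε : ℝ} (hε : 0 < ε) :
    ∃ q : ℝ[X], ∀ x ∈ Icc a b,
      |q.eval x - f x| ≤ ε ∧ |q.derivative.eval x - deriv f x| ≤ ε := by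
  rcases lt_or_ge b a with hba | hab
  · exact ⟨0, fun x hx => absurd (hx.1.trans hx.2) (not_le.2 hba)⟩
  set δ := ε / (b - a + 1)
  have hδ : 0 < δ := by positivity
  obtain ⟨p, hp⟩ := exists_polynomial_near_of_continuousOn a b (deriv f)
    (hf.continuous_deriv le_rfl).continuousOn δ hδ
  obtain ⟨P, rfl⟩ := derivative_surjective p
  set q := P + C (f a - P.eval a)
  have hq' : q.derivative = P.derivative := by simp [q]
  have hδε : δ ≤ ε := div_le_self hε.le (by linarith)
  refine ⟨q, fun x hx => ⟨?_, by rw [hq']; exact (hp x hx).le.trans hδε⟩⟩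
  have hderiv : ∀ y ∈ Icc a b, HasDerivWithinAt (fun y => q.eval y - f y)
      (P.derivative.eval y - deriv f y) (Icc a b) y := fun y _ =>
    (hq' ▸ (q.hasDerivAt y)).sub (hf.differentiable one_ne_zero y).hasDerivAt |>.hasDerivWithinAt
  have hmvt := (convex_Icc a b).norm_image_sub_le_of_norm_hasDerivWithin_le hderiv
    (fun y hy => (hp y hy).le) (left_mem_Icc.2 hab) hx
  have hqa : q.eval a - f a = 0 := by simp [q]
  rw [hqa, sub_zero, Real.norm_eq_abs, Real.norm_eq_abs, abs_of_nonneg (sub_nonneg.2 hx.1)] at hmvt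
  calc |q.eval x - f x| ≤ δ * (x - a) := hmvt
    _ ≤ δ * (b - a + 1) := by gcongr; linarith [hx.2]
    _ = ε := div_mul_cancel₀ _ (by linarith)

theorem exists_seq_polynomial_tendstoUniformlyOn_of_contDiff_one {f : ℝ → ℝ}
    (hf : ContDiff ℝ 1 f) (a b : ℝ) :
    ∃ q : ℕ → ℝ[X], TendstoUniformlyOn (fun k => (q k).eval) f atTop (Icc a b) ∧
      TendstoUniformlyOn (fun k => (q k).derivative.eval) (deriv f) atTop (Icc a b) := by
  choose q hq using fun k : ℕ =>
    exists_polynomial_near_of_contDiff_one hf a b k.one_div_pos_of_nat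
  exact ⟨q, tendstoUniformlyOn_of_abs_sub_le_one_div fun k x hx => (hq k x hx).1,
    tendstoUniformlyOn_of_abs_sub_le_one_div fun k x hx => (hq k x hx).2⟩

theorem IsCompact.exists_forall_spectrum_subset_Icc {α A : Type*} [TopologicalSpace α]
    [NormedRing A] [NormedAlgebra ℝ A] [CompleteSpace A] {K : Set α} (hK : IsCompact K)
    {X : α → A} (hX : ContinuousOn X K) : ∃ R, ∀ t ∈ K, spectrum ℝ (X t) ⊆ Icc (-R) R := by
  obtain ⟨C, hC⟩ := hK.exists_bound_of_continuousOn hX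
  refine ⟨C * ‖(1 : A)‖, fun t ht x hx => abs_le.1 ?_⟩
  have hx := spectrum.subset_closedBall_norm_mul (X t) hx
  rw [Metric.mem_closedBall, dist_zero_right, Real.norm_eq_abs] at hx
  exact hx.trans (by gcongr; exact hC t ht)

namespace Matrix

theorem abs_trace_mul_le {n R : Type*} [Fintype n] [CommRing R] [LinearOrder R]
    [IsStrictOrderedRing R] {A : Matrix n n R} {a : R} (hA : ∀ i j, |A i j| ≤ a)
    (B : Matrix n n R) : |(A * B).trace| ≤ a * ∑ i, ∑ j, |B i j| := by
  calc |(A * B).trace| = |∑ i, ∑ j, A i j * B j i| := by simp [trace, mul_apply]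
    _ ≤ ∑ i, ∑ j, |A i j| * |B j i| := by
      refine (Finset.abs_sum_le_sum_abs _ _).trans (Finset.sum_le_sum fun i _ => ?_)
      simpa only [abs_mul] using Finset.abs_sum_le_sum_abs (fun j => A i j * B j i) Finset.univ
    _ ≤ ∑ i, ∑ j, a * |B j i| := by gcongr with i _ j _; exact hA i j
    _ = a * ∑ i, ∑ j, |B i j| := by rw [Finset.sum_comm]; simp [Finset.mul_sum]

theorem sum_sq_mul_apply_eq_trace {m n R : Type*} [Fintype m] [Fintype n] [CommRing R]
    (P : Matrix m n R) {S : Matrix n n R} (hS : Sᵀ = S) :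
    ∑ i, ∑ j, (P * S) i j ^ 2 = (Pᵀ * P * (S * S)).trace := by
  have hsq : ∑ i, ∑ j, (P * S) i j ^ 2 = ((P * S)ᵀ * (P * S)).trace := by
    simp only [trace, diag, mul_apply (M := (P * S)ᵀ), transpose_apply, sq]
    exact Finset.sum_comm
  rw [hsq, transpose_mul, hS, trace_mul_comm, ← Matrix.mul_assoc, trace_mul_comm]
  simp only [Matrix.mul_assoc]

theorem of_ite_eq_add_smul_single {m n R : Type*} [DecidableEq m] [DecidableEq n] [Ring R]
    (Y : m → n → R) (a : m) (b : n) (t : R) :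
    of (fun i j => if i = a ∧ j = b then t else Y i j) = of Y + (t - Y a b) • single a b 1 := by
  ext i j
  by_cases h : i = a ∧ j = b
  · obtain ⟨rfl, rfl⟩ := h
    simp
  · have hne : ¬(a = i ∧ b = j) := fun h' => h ⟨h'.1.symm, h'.2.symm⟩
    simp [h, single_apply_of_ne (h := hne)]

theorem isHermitian_transpose_mul_self {m n : Type*} [Fintype m] (A : Matrix m n ℝ) :
    (Aᵀ * A).IsHermitian := by
  simpa using isHermitian_conjTranspose_mul_self A

variable {n : Type*} [Fintype n] [DecidableEq n]

theorem transpose_cfc (g : ℝ → ℝ) (A : Matrix n n ℝ) : (cfc g A)ᵀ = cfc g A := by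
  rw [← conjTranspose_eq_transpose_of_trivial, ← star_eq_conjTranspose]
  exact (cfc_predicate g A).star_eq

theorem IsHermitian.trace_cfc {𝕜 : Type*} [RCLike 𝕜] {A : Matrix n n 𝕜} (hA : A.IsHermitian)
    (g : ℝ → ℝ) : (cfc g A).trace = ∑ i, (g (hA.eigenvalues i) : 𝕜) := by
  rw [hA.cfc_eq, IsHermitian.cfc, Unitary.conjStarAlgAut_apply, trace_mul_cycle,
    Unitary.coe_star_mul_self, Matrix.one_mul, trace_diagonal]
  rfl

theorem IsHermitian.trace_mul_cfc {A : Matrix n n ℝ} (hA : A.IsHermitian) (g : ℝ → ℝ) :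
    (A * cfc g A).trace = ∑ i, hA.eigenvalues i * g (hA.eigenvalues i) := by
  have h := cfc_mul (fun x => x) g A ((spectrum ℝ A).toFinite.continuousOn _)
    ((spectrum ℝ A).toFinite.continuousOn _)
  rw [cfc_id' ℝ A hA.isSelfAdjoint] at h
  rw [← h, hA.trace_cfc]
  rfl

theorem IsHermitian.abs_cfc_apply_le {A : Matrix n n ℝ} (hA : A.IsHermitian) {g : ℝ → ℝ}
    {ε : ℝ} (hg : ∀ x ∈ spectrum ℝ A, |g x| ≤ ε) (i j : n) :
    |cfc g A i j| ≤ Fintype.card n * ε := by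
  set U : Matrix n n ℝ := (hA.eigenvectorUnitary : Matrix n n ℝ)
  have hU : ∀ a b, |U a b| ≤ 1 := entry_norm_bound_of_unitary hA.eigenvectorUnitary.2
  have hcfc : cfc g A i j = ∑ k, U i k * g (hA.eigenvalues k) * U j k := by
    simp [hA.cfc_eq, IsHermitian.cfc, U, mul_apply, diagonal_apply]
  rw [hcfc]
  calc |∑ k, U i k * g (hA.eigenvalues k) * U j k|
      ≤ ∑ k, |U i k * g (hA.eigenvalues k) * U j k| := Finset.abs_sum_le_sum_abs _ _
    _ ≤ ∑ _k : n, 1 * ε * 1 := by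
      gcongr with k
      rw [abs_mul, abs_mul]
      have hε : 0 ≤ ε := (abs_nonneg _).trans (hg _ (hA.eigenvalues_mem_spectrum_real k))
      gcongr
      exacts [hU i k, hg _ (hA.eigenvalues_mem_spectrum_real k), hU j k]
    _ = Fintype.card n * ε := by simp

end Matrix

section

attribute [local instance] Matrix.linftyOpNormedAddCommGroup Matrix.linftyOpNormedSpace
  Matrix.linftyOpNormedRing Matrix.linftyOpNormedAlgebra

theorem HasDerivAt.matrix_trace {n 𝕜 : Type*} [Fintype n] [NontriviallyNormedField 𝕜]
    [CompleteSpace 𝕜] {A : 𝕜 → Matrix n n 𝕜} {A' : Matrix n n 𝕜} {t : 𝕜} (h : HasDerivAt A A' t) :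
    HasDerivAt (fun s => (A s).trace) A'.trace t :=
  (traceLinearMap n 𝕜 𝕜).toContinuousLinearMap.hasFDerivAt.comp_hasDerivAt t h

variable {n : Type*} [Fintype n] [DecidableEq n]

theorem tendstoUniformlyOn_trace_cfc_mul {α ι : Type*} {l : Filter ι} {G : ι → ℝ → ℝ}
    {g : ℝ → ℝ} {S : Set ℝ} {s : Set α} {X D : α → Matrix n n ℝ}
    (hG : TendstoUniformlyOn G g l S) (hX : ∀ t ∈ s, (X t).IsHermitian)
    (hXS : ∀ t ∈ s, spectrum ℝ (X t) ⊆ S) {B : ℝ} (hD : ∀ t ∈ s, ∑ i, ∑ j, |D t i j| ≤ B) :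
    TendstoUniformlyOn (fun k t => (cfc (G k) (X t) * D t).trace)
      (fun t => (cfc g (X t) * D t).trace) l s := by
  rw [Metric.tendstoUniformlyOn_iff] at hG ⊢
  intro δ hδ
  have hC : 0 < Fintype.card n * |B| + 1 := by positivity
  filter_upwards [hG (δ / (Fintype.card n * |B| + 1)) (by positivity)] with k hk t ht
  have hcont : ∀ h : ℝ → ℝ, ContinuousOn h (spectrum ℝ (X t)) :=
    (spectrum ℝ (X t)).toFinite.continuousOn
  have hdiff : ∀ i j, |cfc (fun x => g x - G k x) (X t) i j|
      ≤ Fintype.card n * (δ / (Fintype.card n * |B| + 1)) :=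
    (hX t ht).abs_cfc_apply_le fun x hx => by
      rw [← Real.dist_eq]; exact (hk x (hXS t ht hx)).le
  rw [Real.dist_eq, ← trace_sub, ← sub_mul, ← cfc_sub g (G k) _ (hcont g) (hcont (G k))]
  calc _ ≤ _ := abs_trace_mul_le hdiff (D t)
    _ ≤ Fintype.card n * (δ / (Fintype.card n * |B| + 1)) * |B| := by
      gcongr; exact (hD t ht).trans (le_abs_self B)
    _ < δ := by
      rw [mul_comm, ← mul_assoc, mul_div_assoc', div_lt_iff₀ hC]
      nlinarith

theorem HasDerivAt.trace_aeval {𝕜 : Type*} [NontriviallyNormedField 𝕜] [CompleteSpace 𝕜]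
    {A : 𝕜 → Matrix n n 𝕜} {A' : Matrix n n 𝕜} {t : 𝕜} (h : HasDerivAt A A' t) (p : 𝕜[X]) :
    HasDerivAt (fun s => (aeval (A s) p).trace) (aeval (A t) (derivative p) * A').trace t := by
  induction p using Polynomial.induction_on' with
  | add p q hp hq =>
    simp only [map_add, trace_add, add_mul]
    exact hp.fun_add hq
  | monomial k a =>
    have hpow : HasDerivAt (fun s => (A s ^ k).trace) (k * (A t ^ (k - 1) * A').trace) t := by
      convert (h.fun_pow' k).matrix_trace using 1
      rw [trace_sum, Finset.sum_congr rfl fun i hi => ?_, Finset.sum_const, Finset.card_range,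
        nsmul_eq_mul]
      have := Finset.mem_range.1 hi
      rw [trace_mul_comm, ← mul_assoc, ← pow_add, Nat.pred_eq_sub_one,
        show i + (k - 1 - i) = k - 1 by omega]
    have hval : (aeval (A t) (derivative (monomial k a)) * A').trace
        = a * (k * (A t ^ (k - 1) * A').trace) := by
      rw [derivative_monomial, aeval_monomial]
      simp [Algebra.algebraMap_eq_smul_one, trace_smul, mul_assoc]
    simpa [Algebra.algebraMap_eq_smul_one, trace_smul, hval] using hpow.const_mul a

theorem hasDerivAt_trace_cfc {f : ℝ → ℝ} (hf : ContDiff ℝ 1 f) {X X' : ℝ → Matrix n n ℝ}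
    (hX : ∀ t, HasDerivAt X (X' t) t) (hX' : Continuous X') (hXh : ∀ t, (X t).IsHermitian)
    (t₀ : ℝ) :
    HasDerivAt (fun t => (cfc f (X t)).trace) (cfc (deriv f) (X t₀) * X' t₀).trace t₀ := by
  obtain ⟨R, hR⟩ := (isCompact_closedBall t₀ 1).exists_forall_spectrum_subset_Icc
    (continuous_iff_continuousAt.2 fun t => (hX t).continuousAt).continuousOn
  obtain ⟨B, hB⟩ := (isCompact_closedBall t₀ 1).exists_bound_of_continuousOn
    (f := fun t => ∑ i, ∑ j, |X' t i j|) (by fun_prop)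
  obtain ⟨q, hq, hq'⟩ := exists_seq_polynomial_tendstoUniformlyOn_of_contDiff_one hf (-R) R
  have hRball : ∀ t ∈ Metric.ball t₀ 1, spectrum ℝ (X t) ⊆ Icc (-R) R :=
    fun t ht => hR t (Metric.ball_subset_closedBall ht)
  have hpoly : ∀ t, ∀ p : ℝ[X], cfc p.eval (X t) = aeval (X t) p := fun t p =>
    cfc_polynomial _ _ (hXh t).isSelfAdjoint
  have hderiv : ∀ k, ∀ t ∈ Metric.ball t₀ 1, HasDerivAt (fun t => (aeval (X t) (q k)).trace)
      (aeval (X t) (q k).derivative * X' t).trace t := fun k t _ =>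
    (hX t).trace_aeval (q k)
  have hderiv_lim : TendstoUniformlyOn
      (fun k t => (aeval (X t) (q k).derivative * X' t).trace)
      (fun t => (cfc (deriv f) (X t) * X' t).trace) atTop (Metric.ball t₀ 1) := by
    simp only [← hpoly]
    exact tendstoUniformlyOn_trace_cfc_mul hq' (fun t _ => hXh t) hRball
      fun t ht => (le_abs_self _).trans (hB t (Metric.ball_subset_closedBall ht))
  have hlim : ∀ t ∈ Metric.ball t₀ 1,
      Tendsto (fun k => (aeval (X t) (q k)).trace) atTop (𝓝 (cfc f (X t)).trace) := by
    intro t ht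
    simp only [← hpoly]
    exact (continuous_id.matrix_trace.tendsto _).comp (tendsto_cfc_fun (hq.mono (hRball t ht))
      (Eventually.of_forall fun k => (spectrum ℝ (X t)).toFinite.continuousOn _))
  exact hasDerivAt_of_tendstoUniformlyOn Metric.isOpen_ball hderiv_lim
    (Eventually.of_forall hderiv) hlim (Metric.mem_ball_self one_pos)

theorem hasDerivAt_trace_cfc_transpose_mul_self {m : Type*} [Fintype m] {f : ℝ → ℝ}
    (hf : ContDiff ℝ 1 f) (P E : Matrix m n ℝ) :
    HasDerivAt (fun t : ℝ => (cfc f ((P + t • E)ᵀ * (P + t • E))).trace)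
      (2 * (cfc (deriv f) (Pᵀ * P) * Pᵀ * E).trace) 0 := by
  have hX : ∀ t : ℝ, HasDerivAt (fun s : ℝ => (P + s • E)ᵀ * (P + s • E))
      (Pᵀ * E + Eᵀ * P + (2 * t) • (Eᵀ * E)) t := fun t => by
    have hpath : (fun s : ℝ => (P + s • E)ᵀ * (P + s • E))
        = fun s => Pᵀ * P + s • (Pᵀ * E + Eᵀ * P) + s ^ 2 • (Eᵀ * E) := by
      ext1 s
      simp only [transpose_add, transpose_smul, Matrix.add_mul, Matrix.mul_add, Matrix.smul_mul,
        Matrix.mul_smul]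
      module
    rw [hpath]
    exact ((((hasDerivAt_id t).smul_const (Pᵀ * E + Eᵀ * P)).const_add (Pᵀ * P)).fun_add
      ((hasDerivAt_pow 2 t).smul_const (Eᵀ * E))).congr_deriv (by simp)
  convert hasDerivAt_trace_cfc hf hX (by fun_prop)
    (fun t => (P + t • E).isHermitian_transpose_mul_self) 0 using 1
  simp only [zero_smul, add_zero, mul_zero, Matrix.mul_add, trace_add]
  rw [two_mul, ← Matrix.mul_assoc]
  congr 1
  rw [← trace_transpose, transpose_mul, transpose_mul, transpose_cfc, transpose_transpose,
    ← Matrix.mul_assoc, trace_mul_cycle, Matrix.mul_assoc]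

end

/-- For `X = YᵗY` with eigenvalues `λ_1, …, λ_N` and `f` continuously differentiable,
`Σ_{m,n} (∂ tr f(YᵗY)/∂y_{mn})² = 4 tr(X f'(X)²) = 4 Σ_i λ_i f'(λ_i)²`. -/
theorem sum_sq_partial_deriv_trace (M N : ℕ) (Y : Fin M → Fin N → ℝ)
    (f : ℝ → ℝ) (hf : ContDiff ℝ 1 f)
    (hH : ∀ Z : Fin M → Fin N → ℝ, ((Matrix.of Z)ᵀ * Matrix.of Z).IsHermitian) :
    (∑ m : Fin M, ∑ n : Fin N,
        (deriv (fun t : ℝ =>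
          ((hH (fun i j => if i = m ∧ j = n then t else Y i j)).cfc f).trace) (Y m n)) ^ 2)
      = 4 * ((Matrix.of Y)ᵀ * Matrix.of Y *
          ((hH Y).cfc (deriv f) * (hH Y).cfc (deriv f))).trace ∧
    (∑ m : Fin M, ∑ n : Fin N,
        (deriv (fun t : ℝ =>
          ((hH (fun i j => if i = m ∧ j = n then t else Y i j)).cfc f).trace) (Y m n)) ^ 2)
      = 4 * ∑ i : Fin N, (hH Y).eigenvalues i * (deriv f ((hH Y).eigenvalues i)) ^ 2 := by
  have hS : ((hH Y).cfc (deriv f))ᵀ = (hH Y).cfc (deriv f) := by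
    rw [← IsHermitian.cfc_eq, transpose_cfc]
  have hpartial : ∀ m n, deriv (fun t : ℝ =>
      ((hH (fun i j => if i = m ∧ j = n then t else Y i j)).cfc f).trace) (Y m n)
        = 2 * (of Y * (hH Y).cfc (deriv f)) m n := by
    intro m n
    have h := HasDerivAt.comp_sub_const (Y m n) (Y m n) (by
      rw [sub_self]; exact hasDerivAt_trace_cfc_transpose_mul_self hf (of Y) (single m n 1))
    simp only [← IsHermitian.cfc_eq, of_ite_eq_add_smul_single]
    refine h.deriv.trans ?_
    rw [trace_mul_single, MulOpposite.op_one, one_smul,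
      ← transpose_apply (cfc (deriv f) ((of Y)ᵀ * of Y) * (of Y)ᵀ), transpose_mul,
      transpose_transpose, transpose_cfc]
  have heig : ((of Y)ᵀ * of Y * ((hH Y).cfc (deriv f) * (hH Y).cfc (deriv f))).trace
      = ∑ i, (hH Y).eigenvalues i * deriv f ((hH Y).eigenvalues i) ^ 2 := by
    rw [← IsHermitian.cfc_eq, ← cfc_mul (deriv f) (deriv f) _
      ((spectrum ℝ _).toFinite.continuousOn _) ((spectrum ℝ _).toFinite.continuousOn _),
      (hH Y).trace_mul_cfc]
    simp only [sq]
  simp only [hpartial, mul_pow, ← Finset.mul_sum, sum_sq_mul_apply_eq_trace _ hS, heig]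
  norm_num
end

section
/- If μ is a probability measure on ℝ all of whose moments are finite, g is continuous with |g(x)| ≤ P(x) for some polynomial P, and μ_N are random probability measures such that ⟨μ_N, x^r⟩ → ⟨μ, x^r⟩ almost surely for every r ∈ ℕ, and μ is determined by its moments, then ⟨μ_N, g⟩ → ⟨μ, g⟩ almost surely. -/
/-!
Convergent moment sequences are bounded. A bound on the second moments makes the family
`μ_N(ω)` tight, so by Prokhorov's theorem every subsequence has a weakly convergent further
subsequence. A bound on the moment of order `2m + 2` makes every continuous `h` with
`|h x| ≤ c (1 + x ^ (2m))` uniformly integrable: cutting `h` off outside `[-R, R]` changes its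
integral by `O(R⁻²)` uniformly in `N`. Hence all moments pass to the weak limit `ρ`, so `ρ = μ` by
determinacy; thus `μ_N(ω) → μ` weakly, and uniform integrability once more gives
`⟨μ_N(ω), g⟩ → ⟨μ, g⟩`, since `|g| ≤ Q` is dominated by `c (1 + x ^ (2 deg Q))`.
-/

open Filter Topology

lemma abs_pow_le_one_add_pow (x : ℝ) {i m : ℕ} (h : i ≤ 2 * m) : |x| ^ i ≤ 1 + x ^ (2 * m) := by
  rw [← (even_two_mul m).pow_abs]
  rcases le_or_gt |x| 1 with hx | hx
  · linarith [pow_le_one₀ (abs_nonneg x) hx (n := i), pow_nonneg (abs_nonneg x) (2 * m)]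
  · linarith [pow_le_pow_right₀ hx.le h]

lemma sq_mul_one_add_pow_le {x R : ℝ} (hR : 1 ≤ R) (hx : R ≤ |x|) (m : ℕ) :
    R ^ 2 * (1 + x ^ (2 * m)) ≤ 2 * x ^ (2 * m + 2) := by
  have h1 : 1 ≤ x ^ (2 * m) := by
    rw [← (even_two_mul m).pow_abs]; exact one_le_pow₀ (hR.trans hx)
  have h2 : R ^ 2 ≤ x ^ 2 := by
    rw [← sq_abs x]; exact pow_le_pow_left₀ (by linarith) hx 2
  calc R ^ 2 * (1 + x ^ (2 * m)) ≤ x ^ 2 * (2 * x ^ (2 * m)) := by gcongr; linarith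
    _ = 2 * x ^ (2 * m + 2) := by ring

lemma Polynomial.abs_eval_le_mul_one_add_pow (Q : Polynomial ℝ) (x : ℝ) :
    |Q.eval x| ≤
      (∑ i ∈ Finset.range (Q.natDegree + 1), |Q.coeff i|) * (1 + x ^ (2 * Q.natDegree)) := by
  rw [Polynomial.eval_eq_sum_range, Finset.sum_mul]
  refine (Finset.abs_sum_le_sum_abs _ _).trans (Finset.sum_le_sum fun i hi => ?_)
  rw [abs_mul, abs_pow]
  exact mul_le_mul_of_nonneg_left
    (abs_pow_le_one_add_pow x (by have := Finset.mem_range.1 hi; omega)) (abs_nonneg _)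

namespace MeasureTheory

lemma measure_norm_gt_le_ofReal_div {E : Type*} [NormedAddCommGroup E] [MeasurableSpace E]
    [OpensMeasurableSpace E] {μ : Measure E} [IsFiniteMeasure μ]
    (hint : Integrable (fun x => ‖x‖ ^ 2) μ) {r : ℝ} (hr : 0 < r) :
    μ {x | r < ‖x‖} ≤ ENNReal.ofReal ((∫ x, ‖x‖ ^ 2 ∂μ) / r ^ 2) := by
  have hsub : {x : E | r < ‖x‖} ⊆ {x | r ^ 2 ≤ ‖x‖ ^ 2} := fun x hx =>
    pow_le_pow_left₀ hr.le hx.le 2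
  have markov := mul_meas_ge_le_integral_of_nonneg (ae_of_all _ fun x => by positivity) hint (r ^ 2)
  calc μ {x | r < ‖x‖} ≤ μ {x | r ^ 2 ≤ ‖x‖ ^ 2} := measure_mono hsub
    _ = ENNReal.ofReal (μ.real {x | r ^ 2 ≤ ‖x‖ ^ 2}) :=
        (ofReal_measureReal (measure_ne_top _ _)).symm
    _ ≤ _ := ENNReal.ofReal_le_ofReal (by rw [le_div_iff₀ (by positivity)]; linarith)

lemma isTightMeasureSet_range_of_integral_norm_sq_le {E : Type*} [NormedAddCommGroup E]
    [MeasurableSpace E] [BorelSpace E] [ProperSpace E] {μ : ℕ → Measure E}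
    [∀ n, IsFiniteMeasure (μ n)] (hint : ∀ n, Integrable (fun x => ‖x‖ ^ 2) (μ n)) {B : ℝ}
    (hB : ∀ n, ∫ x, ‖x‖ ^ 2 ∂μ n ≤ B) :
    IsTightMeasureSet (Set.range μ) := by
  refine isTightMeasureSet_of_tendsto_measure_norm_gt ?_
  have hbound : ∀ᶠ r : ℝ in atTop,
      ⨆ ν ∈ Set.range μ, ν {x | r < ‖x‖} ≤ ENNReal.ofReal (B / r ^ 2) := by
    filter_upwards [eventually_gt_atTop 0] with r hr
    simp only [iSup_range]
    exact iSup_le fun n => (measure_norm_gt_le_ofReal_div (hint n) hr).trans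
      (ENNReal.ofReal_le_ofReal (by gcongr; exact hB n))
  have hlim : Tendsto (fun r : ℝ => ENNReal.ofReal (B / r ^ 2)) atTop (𝓝 0) := by
    simpa using ENNReal.tendsto_ofReal
      (tendsto_const_nhds.div_atTop (tendsto_pow_atTop two_ne_zero))
  exact tendsto_of_tendsto_of_tendsto_of_le_of_le' tendsto_const_nhds hlim
    (Eventually.of_forall fun _ => zero_le) hbound

lemma ProbabilityMeasure.exists_tendsto_subseq_of_integral_norm_sq_le {E : Type*}
    [NormedAddCommGroup E] [MeasurableSpace E] [BorelSpace E] [ProperSpace E]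
    {ν : ℕ → ProbabilityMeasure E} (hint : ∀ n, Integrable (fun x => ‖x‖ ^ 2) (ν n : Measure E))
    {B : ℝ} (hB : ∀ n, ∫ x, ‖x‖ ^ 2 ∂(ν n : Measure E) ≤ B) :
    ∃ ρ : ProbabilityMeasure E, ∃ φ : ℕ → ℕ, StrictMono φ ∧ Tendsto (ν ∘ φ) atTop (𝓝 ρ) := by
  have htight : IsTightMeasureSet {(μ : Measure E) | μ ∈ Set.range ν} := by
    simp only [Set.mem_range, exists_exists_eq_and]
    exact isTightMeasureSet_range_of_integral_norm_sq_le hint hB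
  obtain ⟨ρ, -, φ, hφ, hlim⟩ := (isCompact_closure_of_isTightMeasureSet htight).tendsto_subseq
    fun n => subset_closure (Set.mem_range_self n)
  exact ⟨ρ, φ, hφ, hlim⟩

lemma ProbabilityMeasure.integrable_and_integral_le_of_tendsto {Ω : Type*}
    [MeasurableSpace Ω] [TopologicalSpace Ω] [OpensMeasurableSpace Ω] [HasOuterApproxClosed Ω]
    {ν : ℕ → ProbabilityMeasure Ω} {ρ : ProbabilityMeasure Ω} (hν : Tendsto ν atTop (𝓝 ρ))
    {f : Ω → ℝ} (hf : Continuous f)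
    (hf0 : 0 ≤ f) (hint : ∀ n, Integrable f (ν n : Measure Ω)) {B : ℝ}
    (hB : ∀ n, ∫ x, f x ∂(ν n : Measure Ω) ≤ B) :
    Integrable f (ρ : Measure Ω) ∧ ∫ x, f x ∂(ρ : Measure Ω) ≤ B := by
  have hB0 : 0 ≤ B := (integral_nonneg hf0).trans (hB 0)
  have hlint : ∫⁻ x, ENNReal.ofReal (f x) ∂(ρ : Measure Ω) ≤ ENNReal.ofReal B := by
    refine (lintegral_le_liminf_lintegral_of_forall_isOpen_measure_le_liminf_measure hf hf0
      fun G hG => ProbabilityMeasure.le_liminf_measure_open_of_tendsto hν hG).trans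
      (liminf_le_of_frequently_le' (Frequently.of_forall fun n => ?_))
    rw [← ofReal_integral_eq_lintegral_ofReal (hint n) (ae_of_all _ hf0)]
    exact ENNReal.ofReal_le_ofReal (hB n)
  have hint_ρ : Integrable f (ρ : Measure Ω) :=
    ⟨hf.aestronglyMeasurable, (hasFiniteIntegral_iff_ofReal (ae_of_all _ hf0)).2
      (hlint.trans_lt ENNReal.ofReal_lt_top)⟩
  refine ⟨hint_ρ, ?_⟩
  rw [integral_eq_lintegral_of_nonneg_ae (ae_of_all _ hf0) hf.aestronglyMeasurable]
  exact ENNReal.toReal_le_of_le_ofReal hB0 hlint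

lemma abs_integral_sub_integral_mul_le {ν : Measure ℝ} [IsFiniteMeasure ν] {h φ : ℝ → ℝ}
    (hh : Continuous h) (hφ : Continuous φ) (hφc : HasCompactSupport φ) (hφ0 : ∀ x, 0 ≤ φ x)
    (hφ1 : ∀ x, φ x ≤ 1) {R : ℝ} (hR : 1 ≤ R) (hφR : ∀ x, |x| ≤ R → φ x = 1) {c : ℝ} {m : ℕ}
    (hh_le : ∀ x, |h x| ≤ c * (1 + x ^ (2 * m)))
    (hint : Integrable (fun x => x ^ (2 * m + 2)) ν) {B : ℝ}
    (hB : ∫ x, x ^ (2 * m + 2) ∂ν ≤ B) :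
    |∫ x, h x ∂ν - ∫ x, h x * φ x ∂ν| ≤ 2 * c / R ^ 2 * B := by
  have hc : 0 ≤ c := nonneg_of_mul_nonneg_left ((abs_nonneg _).trans (hh_le 0)) (by positivity)
  have htail : ∀ x, ‖h x * (1 - φ x)‖ ≤ 2 * c / R ^ 2 * x ^ (2 * m + 2) := by
    intro x
    rw [Real.norm_eq_abs, abs_mul, abs_of_nonneg (sub_nonneg.2 (hφ1 x))]
    rcases le_or_gt |x| R with hx | hx
    · rw [hφR x hx, sub_self, mul_zero]
      have := Even.pow_nonneg ⟨m + 1, by ring⟩ x (n := 2 * m + 2)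
      positivity
    · calc |h x| * (1 - φ x) ≤ c * (1 + x ^ (2 * m)) := by
            nlinarith [abs_nonneg (h x), hφ0 x, hh_le x]
        _ ≤ 2 * c / R ^ 2 * x ^ (2 * m + 2) := by
            rw [div_mul_eq_mul_div, le_div_iff₀ (by positivity)]
            nlinarith [sq_mul_one_add_pow_le hR hx.le m]
  have hint_trunc : Integrable (fun x => h x * φ x) ν :=
    (hh.mul hφ).integrable_of_hasCompactSupport hφc.mul_left
  have hint_tail : Integrable (fun x => h x * (1 - φ x)) ν :=
    (hint.const_mul _).mono' (hh.mul (continuous_const.sub hφ)).aestronglyMeasurable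
      (ae_of_all _ htail)
  have hint_h : Integrable h ν := by
    refine (hint_trunc.add hint_tail).congr (ae_of_all _ fun x => ?_)
    simp only [Pi.add_apply]; ring
  calc |∫ x, h x ∂ν - ∫ x, h x * φ x ∂ν| = ‖∫ x, h x * (1 - φ x) ∂ν‖ := by
        rw [← integral_sub hint_h hint_trunc, Real.norm_eq_abs]; simp only [mul_sub, mul_one]
    _ ≤ ∫ x, 2 * c / R ^ 2 * x ^ (2 * m + 2) ∂ν :=
        norm_integral_le_of_norm_le (hint.const_mul _) (ae_of_all _ htail)
    _ ≤ 2 * c / R ^ 2 * B := by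
        rw [integral_const_mul]; exact mul_le_mul_of_nonneg_left hB (by positivity)

theorem ProbabilityMeasure.tendsto_integral_of_tendsto_of_integral_pow_le
    {ν : ℕ → ProbabilityMeasure ℝ} {ρ : ProbabilityMeasure ℝ} (hν : Tendsto ν atTop (𝓝 ρ))
    {h : ℝ → ℝ} (hh : Continuous h) {c : ℝ} {m : ℕ} (hh_le : ∀ x, |h x| ≤ c * (1 + x ^ (2 * m)))
    (hint : ∀ n, Integrable (fun x => x ^ (2 * m + 2)) (ν n : Measure ℝ)) {B : ℝ}
    (hB : ∀ n, ∫ x, x ^ (2 * m + 2) ∂(ν n : Measure ℝ) ≤ B) :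
    Tendsto (fun n => ∫ x, h x ∂(ν n : Measure ℝ)) atTop (𝓝 (∫ x, h x ∂(ρ : Measure ℝ))) := by
  obtain ⟨hint_ρ, hB_ρ⟩ := ProbabilityMeasure.integrable_and_integral_le_of_tendsto hν
    (f := fun x : ℝ => x ^ (2 * m + 2)) (continuous_pow _)
    (fun x => Even.pow_nonneg ⟨m + 1, by ring⟩ x) hint hB
  let bump (k : ℕ) : ContDiffBump (0 : ℝ) := ⟨k + 1, k + 2, by positivity, by linarith⟩
  let e (k : ℕ) : ℝ := 2 * c / ((k : ℝ) + 1) ^ 2 * B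
  have happrox : ∀ μ : ProbabilityMeasure ℝ, Integrable (fun x => x ^ (2 * m + 2)) (μ : Measure ℝ) →
      ∫ x, x ^ (2 * m + 2) ∂(μ : Measure ℝ) ≤ B → ∀ k,
      dist (∫ x, h x ∂(μ : Measure ℝ)) (∫ x, h x * bump k x ∂(μ : Measure ℝ)) ≤ e k := by
    intro μ hμ hμB k
    refine abs_integral_sub_integral_mul_le hh (bump k).continuous (bump k).hasCompactSupport
      (fun x => (bump k).nonneg) (fun x => (bump k).le_one)
      (le_add_of_nonneg_left k.cast_nonneg) (fun x hx => ?_) hh_le hμ hμB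
    exact (bump k).one_of_mem_closedBall (by simpa using hx)
  have he : Tendsto e atTop (𝓝 0) := by
    have hR : Tendsto (fun k : ℕ => ((k : ℝ) + 1) ^ 2) atTop atTop :=
      (tendsto_pow_atTop two_ne_zero).comp
        (tendsto_atTop_add_const_right _ 1 tendsto_natCast_atTop_atTop)
    simpa using (tendsto_const_nhds.div_atTop hR).mul_const B
  -- Moore–Osgood: the truncated integrals converge for each fixed `k` and approximate the
  -- untruncated ones uniformly in `n`.
  refine TendstoUniformly.tendsto_of_eventually_tendsto (p := atTop)
    (F := fun k n => ∫ x, h x * bump k x ∂(ν n : Measure ℝ))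
    (L := fun k => ∫ x, h x * bump k x ∂(ρ : Measure ℝ)) ?_ (Eventually.of_forall fun k => ?_) ?_
  · rw [Metric.tendstoUniformly_iff]
    intro ε hε
    filter_upwards [he.eventually (gt_mem_nhds hε)] with k hk n
    exact (happrox _ (hint n) (hB n) k).trans_lt hk
  · exact ProbabilityMeasure.tendsto_iff_forall_integral_tendsto.1 hν
      (ofCompactSupport _ (hh.mul (bump k).continuous) (bump k).hasCompactSupport.mul_left)
  · rw [tendsto_iff_dist_tendsto_zero]
    refine squeeze_zero (fun _ => dist_nonneg) (fun k => ?_) he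
    rw [dist_comm]
    exact happrox ρ hint_ρ hB_ρ k

lemma integrable_of_abs_le_mul_one_add_pow {ν : Measure ℝ} [IsFiniteMeasure ν] {h : ℝ → ℝ}
    (hh : Continuous h) {c : ℝ} {m : ℕ} (hh_le : ∀ x, |h x| ≤ c * (1 + x ^ (2 * m)))
    (hint : Integrable (fun x => x ^ (2 * m)) ν) : Integrable h ν :=
  (((integrable_const 1).add hint).const_mul c).mono' hh.aestronglyMeasurable (ae_of_all _ hh_le)

theorem ProbabilityMeasure.tendsto_of_tendsto_moments {ν : ℕ → ProbabilityMeasure ℝ}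
    {μ : ProbabilityMeasure ℝ}
    (hdet : ∀ ρ : ProbabilityMeasure ℝ, (∀ r : ℕ, Integrable (fun x => x ^ r) (ρ : Measure ℝ) ∧
      ∫ x, x ^ r ∂(ρ : Measure ℝ) = ∫ x, x ^ r ∂(μ : Measure ℝ)) → ρ = μ)
    (hint : ∀ n (r : ℕ), Integrable (fun x => x ^ r) (ν n : Measure ℝ))
    (hconv : ∀ r : ℕ, Tendsto (fun n => ∫ x, x ^ r ∂(ν n : Measure ℝ)) atTop
      (𝓝 (∫ x, x ^ r ∂(μ : Measure ℝ)))) :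
    Tendsto ν atTop (𝓝 μ) := by
  refine tendsto_of_subseq_tendsto fun ns hns => ?_
  have hbdd : ∀ r : ℕ, ∃ B, ∀ n, ∫ x, x ^ r ∂(ν (ns n) : Measure ℝ) ≤ B := fun r =>
    ((hconv r).comp hns).bddAbove_range.imp fun B hB n => hB ⟨n, rfl⟩
  choose B hB using hbdd
  obtain ⟨ρ, φ, hφ, hρ⟩ := ProbabilityMeasure.exists_tendsto_subseq_of_integral_norm_sq_le
    (ν := ν ∘ ns) (fun n => by simpa using hint (ns n) 2) (fun n => by simpa using hB 2 n)
  suffices ρ = μ from ⟨φ, this ▸ hρ⟩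
  have hpow_le (r : ℕ) (x : ℝ) : |x ^ r| ≤ 1 * (1 + x ^ (2 * r)) := by
    rw [one_mul, abs_pow]; exact abs_pow_le_one_add_pow x (by omega)
  refine hdet ρ fun r => ⟨?_, ?_⟩
  · refine integrable_of_abs_le_mul_one_add_pow (continuous_pow r) (hpow_le r) ?_
    exact (ProbabilityMeasure.integrable_and_integral_le_of_tendsto hρ (continuous_pow _)
      (fun x => (even_two_mul r).pow_nonneg x) (fun n => hint _ _) (fun n => hB _ _)).1
  · exact tendsto_nhds_unique (ProbabilityMeasure.tendsto_integral_of_tendsto_of_integral_pow_le hρ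
      (continuous_pow r) (hpow_le r) (fun n => hint _ _) (fun n => hB _ _))
      ((hconv r).comp (hns.comp hφ.tendsto_atTop))

end MeasureTheory

open MeasureTheory

theorem moment_method_polynomial_growth_general {Ω : Type*} [MeasurableSpace Ω] (P : Measure Ω)
    [IsProbabilityMeasure P] (μ : Measure ℝ) [IsProbabilityMeasure μ]
    (hdet : ∀ ν : Measure ℝ, IsProbabilityMeasure ν →
      (∀ r : ℕ, Integrable (fun x => x ^ r) ν ∧ ∫ x, x ^ r ∂ν = ∫ x, x ^ r ∂μ) → ν = μ)
    (μN : ℕ → Ω → Measure ℝ) (hμN : ∀ n ω, IsProbabilityMeasure (μN n ω))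
    (hμNmom : ∀ n ω (r : ℕ), Integrable (fun x => x ^ r) (μN n ω))
    (hconv : ∀ r : ℕ, ∀ᵐ ω ∂P,
      Tendsto (fun n => ∫ x, x ^ r ∂(μN n ω)) atTop (nhds (∫ x, x ^ r ∂μ)))
    (g : ℝ → ℝ) (hg : Continuous g) (Q : Polynomial ℝ) (hgQ : ∀ x, |g x| ≤ Q.eval x) :
    ∀ᵐ ω ∂P, Tendsto (fun n => ∫ x, g x ∂(μN n ω)) atTop (nhds (∫ x, g x ∂μ)) := by
  let μ' : ProbabilityMeasure ℝ := ⟨μ, inferInstance⟩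
  filter_upwards [ae_all_iff.2 hconv] with ω hω
  let ν (n : ℕ) : ProbabilityMeasure ℝ := ⟨μN n ω, hμN n ω⟩
  have hν : Tendsto ν atTop (nhds μ') := ProbabilityMeasure.tendsto_of_tendsto_moments
    (fun ρ hρ => Subtype.ext (hdet ρ ρ.prop hρ)) (hμNmom · ω) hω
  obtain ⟨B, hB⟩ := (hω (2 * Q.natDegree + 2)).bddAbove_range
  exact ProbabilityMeasure.tendsto_integral_of_tendsto_of_integral_pow_le hν hg
    (fun x => (hgQ x).trans ((le_abs_self _).trans (Q.abs_eval_le_mul_one_add_pow x)))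
    (hμNmom · ω _) (fun n => hB ⟨n, rfl⟩)

/-- Moment method upgrade: if `μ` is a probability measure with all moments finite which is
determined by its moments, `μ_N` are random probability measures with finite moments whose
moments converge almost surely to those of `μ`, and `g` is continuous of polynomial growth,
then `⟨μ_N, g⟩ → ⟨μ, g⟩` almost surely. -/
theorem moment_method_polynomial_growth {Ω : Type*} [MeasurableSpace Ω] (P : Measure Ω)
    [IsProbabilityMeasure P] (μ : Measure ℝ) [IsProbabilityMeasure μ]
    (hmom : ∀ r : ℕ, Integrable (fun x => x ^ r) μ)
    (hdet : ∀ ν : Measure ℝ, IsProbabilityMeasure ν →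
      (∀ r : ℕ, Integrable (fun x => x ^ r) ν ∧ ∫ x, x ^ r ∂ν = ∫ x, x ^ r ∂μ) → ν = μ)
    (μN : ℕ → Ω → Measure ℝ) (hμN : ∀ n ω, IsProbabilityMeasure (μN n ω))
    (hμNmom : ∀ n ω (r : ℕ), Integrable (fun x => x ^ r) (μN n ω))
    (hconv : ∀ r : ℕ, ∀ᵐ ω ∂P,
      Tendsto (fun n => ∫ x, x ^ r ∂(μN n ω)) atTop (nhds (∫ x, x ^ r ∂μ)))
    (g : ℝ → ℝ) (hg : Continuous g) (Q : Polynomial ℝ) (hgQ : ∀ x, |g x| ≤ Q.eval x) :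
    ∀ᵐ ω ∂P, Tendsto (fun n => ∫ x, g x ∂(μN n ω)) atTop (nhds (∫ x, g x ∂μ)) :=
  moment_method_polynomial_growth_general P μ hdet μN hμN hμNmom hconv g hg Q hgQ
end
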